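/- arXiv:2401.07924 — 3 statements merged into one kernel-verified Lean document; each statement's English description precedes it below -/
import Mathlib

section
/- For every n ≥ 3, there exists a surjective group homomorphism q_n from the cactus group J_n onto the cactus group J_{n−1} determined on the generators σ_i := σ_{1,i} by q_n(σ_i) = σ_{i−1} if i > 2 and q_n(σ_2) = 1. -/
/-- Generators of the cactus group `J n`: pairs `(p, q)` with `1 ≤ p < q ≤ n`. -/
abbrev CactusGen (n : ℕ) := {pq : ℕ × ℕ // 1 ≤ pq.1 ∧ pq.1 < pq.2 ∧ pq.2 ≤ n}

/-- The defining relators of the standard presentation of the cactus group `J n`: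
`σ_{p,q}² = 1`; `σ_{p,q}σ_{r,s} = σ_{r,s}σ_{p,q}` when `[p,q] ∩ [r,s] = ∅`;
and `σ_{p,q}σ_{r,s} = σ_{p+q-s,p+q-r}σ_{p,q}` when `[r,s] ⊆ [p,q]`. -/
def cactusRels (n : ℕ) : Set (FreeGroup (CactusGen n)) :=
  { w | (∃ g : CactusGen n, w = FreeGroup.of g ^ 2) ∨
    (∃ g h : CactusGen n, (g.1.2 < h.1.1 ∨ h.1.2 < g.1.1) ∧
      w = FreeGroup.of g * FreeGroup.of h * (FreeGroup.of h * FreeGroup.of g)⁻¹) ∨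
    (∃ g h k : CactusGen n, g.1.1 ≤ h.1.1 ∧ h.1.2 ≤ g.1.2 ∧
      k.1.1 = g.1.1 + g.1.2 - h.1.2 ∧ k.1.2 = g.1.1 + g.1.2 - h.1.1 ∧
      w = FreeGroup.of g * FreeGroup.of h * (FreeGroup.of k * FreeGroup.of g)⁻¹) }

/-- The cactus group `J n`, as a presented group. -/
abbrev CactusGroup (n : ℕ) := PresentedGroup (cactusRels n)

/-- The generator `σ_{p,q}` of the cactus group `J n` (junk value `1` for invalid indices). -/
def cactusσ (n p q : ℕ) : CactusGroup n :=
  if h : 1 ≤ p ∧ p < q ∧ q ≤ n then PresentedGroup.of ⟨(p, q), h⟩ else 1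

/-!
Deleting the last strand is compatible with the cactus relations once every interval `[p, q]`
is shortened to `[p, q - 1]`: squares and disjointness survive the shortening, and the reflection
of `[r, s] ⊆ [p, q]` inside `[p, q]` becomes the reflection of `[r, s - 1]` inside `[p, q - 1]`.
Intervals of length one collapse to the identity, and every generator of `J_{n-1}` is hit by the
generator of `J_n` on the lengthened interval.
-/

open PresentedGroup

theorem PresentedGroup.surjective_of_of_mem_range {α G : Type*} [Group G]
    {rels : Set (FreeGroup α)} (φ : G →* PresentedGroup rels) (h : ∀ x, of x ∈ φ.range) :
    Function.Surjective φ := by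
  rw [← MonoidHom.range_eq_top, eq_top_iff, ← closure_range_of rels, Subgroup.closure_le]
  rintro _ ⟨x, rfl⟩
  exact h x

section CactusRelations

variable {n p q r s : ℕ}

theorem cactusσ_eq_of (h : 1 ≤ p ∧ p < q ∧ q ≤ n) : cactusσ n p q = of ⟨(p, q), h⟩ :=
  dif_pos h

theorem cactusσ_eq_one (h : ¬(1 ≤ p ∧ p < q ∧ q ≤ n)) : cactusσ n p q = 1 :=
  dif_neg h

theorem cactusσ_mul_self (n p q : ℕ) : cactusσ n p q * cactusσ n p q = 1 := by
  by_cases h : 1 ≤ p ∧ p < q ∧ q ≤ n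
  · rw [cactusσ_eq_of h, ← sq]
    exact one_of_mem (Or.inl ⟨_, rfl⟩)
  · rw [cactusσ_eq_one h, one_mul]

theorem cactusσ_mul_comm_of_disjoint (hd : q < r ∨ s < p) :
    cactusσ n p q * cactusσ n r s = cactusσ n r s * cactusσ n p q := by
  by_cases hpq : 1 ≤ p ∧ p < q ∧ q ≤ n
  · by_cases hrs : 1 ≤ r ∧ r < s ∧ s ≤ n
    · rw [cactusσ_eq_of hpq, cactusσ_eq_of hrs]
      exact mk_eq_mk_of_mul_inv_mem (Or.inr (Or.inl ⟨_, _, hd, rfl⟩))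
    · rw [cactusσ_eq_one hrs, one_mul, mul_one]
  · rw [cactusσ_eq_one hpq, one_mul, mul_one]

theorem cactusσ_mul_of_le (hpq : 1 ≤ p ∧ p < q ∧ q ≤ n) (hpr : p ≤ r) (hsq : s ≤ q) :
    cactusσ n p q * cactusσ n r s = cactusσ n (p + q - s) (p + q - r) * cactusσ n p q := by
  by_cases hrs : r < s
  · have hrs' : 1 ≤ r ∧ r < s ∧ s ≤ n := by omega
    have hk : 1 ≤ p + q - s ∧ p + q - s < p + q - r ∧ p + q - r ≤ n := by omega
    rw [cactusσ_eq_of hpq, cactusσ_eq_of hrs', cactusσ_eq_of hk]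
    exact mk_eq_mk_of_mul_inv_mem (Or.inr (Or.inr ⟨_, _, _, hpr, hsq, rfl, rfl, rfl⟩))
  · rw [cactusσ_eq_one (p := r) (q := s) (by omega),
      cactusσ_eq_one (p := p + q - s) (q := p + q - r) (by omega), one_mul, mul_one]

theorem cactusσ_pred_mul_of_le (hp : 1 ≤ p) (hpr : p ≤ r) (hrs : r < s) (hsq : s ≤ q)
    (hq : q - 1 ≤ n) :
    cactusσ n p (q - 1) * cactusσ n r (s - 1) =
      cactusσ n (p + q - s) (p + q - r - 1) * cactusσ n p (q - 1) := by
  by_cases hlen : p + 1 < q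
  · have key :=
      cactusσ_mul_of_le (n := n) (q := q - 1) (r := r) (s := s - 1) (by omega) hpr (by omega)
    rwa [show p + (q - 1) - (s - 1) = p + q - s by omega,
      show p + (q - 1) - r = p + q - r - 1 by omega] at key
  · -- `[p, q]` has length one, so `r = p`, `s = q` and all three factors are trivial
    rw [cactusσ_eq_one (p := p) (q := q - 1) (by omega),
      cactusσ_eq_one (p := r) (q := s - 1) (by omega),
      cactusσ_eq_one (p := p + q - s) (q := p + q - r - 1) (by omega)]

end CactusRelations

theorem cactusShrink_rels (n : ℕ) :
    ∀ w ∈ cactusRels n, FreeGroup.lift (fun g => cactusσ (n - 1) g.1.1 (g.1.2 - 1)) w = 1 := by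
  rintro w (⟨g, rfl⟩ | ⟨g, h, hd, rfl⟩ | ⟨g, h, k, hgh₁, hgh₂, hk₁, hk₂, rfl⟩)
  · rw [sq, map_mul, FreeGroup.lift_apply_of]
    exact cactusσ_mul_self _ _ _
  · simp only [map_mul, map_inv, FreeGroup.lift_apply_of, mul_inv_eq_one]
    exact cactusσ_mul_comm_of_disjoint (by omega)
  · simp only [map_mul, map_inv, FreeGroup.lift_apply_of, mul_inv_eq_one, hk₁, hk₂]
    obtain ⟨hg₁, -, hg₃⟩ := g.2
    exact cactusσ_pred_mul_of_le hg₁ hgh₁ h.2.2.1 hgh₂ (by omega)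

def cactusShrink (n : ℕ) : CactusGroup n →* CactusGroup (n - 1) :=
  PresentedGroup.toGroup (cactusShrink_rels n)

theorem cactusShrink_cactusσ (n p q : ℕ) :
    cactusShrink n (cactusσ n p q) = cactusσ (n - 1) p (q - 1) := by
  by_cases h : 1 ≤ p ∧ p < q ∧ q ≤ n
  · rw [cactusσ_eq_of h, cactusShrink, toGroup.of]
  · rw [cactusσ_eq_one h, map_one, cactusσ_eq_one (by omega)]

theorem cactusShrink_surjective (n : ℕ) : Function.Surjective (cactusShrink n) := by
  refine surjective_of_of_mem_range _ fun g => ⟨cactusσ n g.1.1 (g.1.2 + 1), ?_⟩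
  rw [cactusShrink_cactusσ, Nat.add_sub_cancel, cactusσ_eq_of g.2]

theorem cactus_surjection_onto_smaller_general (n : ℕ) :
    ∃ q : CactusGroup n →* CactusGroup (n - 1), Function.Surjective q ∧
      (∀ i : ℕ, 2 < i → i ≤ n → q (cactusσ n 1 i) = cactusσ (n - 1) 1 (i - 1)) ∧
      q (cactusσ n 1 2) = 1 :=
  ⟨cactusShrink n, cactusShrink_surjective n, fun i _ _ => cactusShrink_cactusσ n 1 i,
    (cactusShrink_cactusσ n 1 2).trans (cactusσ_eq_one (by omega))⟩

/-- For every `n ≥ 3`, there is a surjective homomorphism `q_n : J_n → J_{n-1}` sending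
`σ_{1,i}` to `σ_{1,i-1}` for `i > 2` and `σ_{1,2}` to `1`. -/
theorem cactus_surjection_onto_smaller (n : ℕ) (hn : 3 ≤ n) :
    ∃ q : CactusGroup n →* CactusGroup (n - 1), Function.Surjective q ∧
      (∀ i : ℕ, 2 < i → i ≤ n → q (cactusσ n 1 i) = cactusσ (n - 1) 1 (i - 1)) ∧
      q (cactusσ n 1 2) = 1 :=
  cactus_surjection_onto_smaller_general n
end

section
/- For every n ≥ 3 and every m ≥ 1, the dihedral group D_m of order 2m is a quotient of the cactus group J_n; that is, there exists a surjective group homomorphism from J_n onto D_m. In particular, there is no upper bound on the orders of finite quotients of J_n. -/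
/-!
Send `σ_{p,q}` to the reflection `sr (p + q)` of `D_m` when `q - p ≥ n - 2`, and to `1`
otherwise. The only such "long" intervals are `[1, n-1]`, `[2, n]` and `[1, n]`; for `n ≥ 3`
no two of them are disjoint, and reflecting a long interval inside a long one gives a long one,
with `sr a * sr b = r (b - a)` turning the nesting relation into an identity of sums. The images
`sr n` and `sr (n + 1)` of `σ_{1,n-1}` and `σ_{1,n}` generate `D_m`, since their product is `r 1`.
-/

namespace DihedralGroup

theorem eq_top_of_sr_mem_of_sr_add_one_mem {m : ℕ} {H : Subgroup (DihedralGroup m)} {a : ZMod m}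
    (ha : sr a ∈ H) (hb : sr (a + 1) ∈ H) : H = ⊤ := by
  have hr_one : r 1 ∈ H := by simpa [sr_mul_sr] using H.mul_mem ha hb
  have hr : ∀ x : ZMod m, r x ∈ H := by
    intro x
    obtain ⟨k, rfl⟩ := ZMod.intCast_surjective x
    simpa [r_one_zpow] using H.zpow_mem hr_one k
  refine eq_top_iff.mpr fun y _ => ?_
  cases y with
  | r x => exact hr x
  | sr x => simpa [sr_mul_r] using H.mul_mem ha (hr (x - a))

end DihedralGroup

open DihedralGroup

namespace CactusGroup

variable {n : ℕ} (m : ℕ)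

def longReflection (g : CactusGen n) : DihedralGroup m :=
  if n - 2 ≤ g.1.2 - g.1.1 then sr ((g.1.1 + g.1.2 : ℕ) : ZMod m) else 1

theorem longReflection_sq (g : CactusGen n) : longReflection m g ^ 2 = 1 := by
  unfold longReflection
  split_ifs <;> simp [sq]

variable {m}

theorem longReflection_commute_of_lt (hn : 3 ≤ n) {g h : CactusGen n} (hgh : g.1.2 < h.1.1) :
    Commute (longReflection m g) (longReflection m h) := by
  obtain ⟨hg1, -, -⟩ := g.2
  obtain ⟨-, -, hh3⟩ := h.2
  unfold Commute SemiconjBy longReflection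
  split_ifs <;> first | omega | simp

theorem longReflection_mul_of_nested {g h k : CactusGen n} (h1 : g.1.1 ≤ h.1.1) (h2 : h.1.2 ≤ g.1.2)
    (hk1 : k.1.1 = g.1.1 + g.1.2 - h.1.2) (hk2 : k.1.2 = g.1.1 + g.1.2 - h.1.1) :
    longReflection m g * longReflection m h = longReflection m k * longReflection m g := by
  obtain ⟨-, hh2, -⟩ := h.2
  unfold longReflection
  split_ifs <;> (try omega) <;> (try simp only [mul_one, one_mul])
  have hsum : (k.1.1 + k.1.2) + (h.1.1 + h.1.2) = 2 * (g.1.1 + g.1.2) := by omega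
  have hsum' := congrArg (fun x : ℕ => (x : ZMod m)) hsum
  simp only [sr_mul_sr, r.injEq]
  push_cast at hsum' ⊢
  linear_combination hsum'

theorem longReflection_rels (hn : 3 ≤ n) :
    ∀ w ∈ cactusRels n, FreeGroup.lift (longReflection m) w = 1 := by
  rintro w (⟨g, rfl⟩ | ⟨g, h, hgh | hhg, rfl⟩ | ⟨g, h, k, h1, h2, hk1, hk2, rfl⟩) <;>
    simp only [map_pow, map_mul, map_inv, FreeGroup.lift_apply_of, mul_inv_eq_one]
  · exact longReflection_sq m g
  · exact (longReflection_commute_of_lt hn hgh).eq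
  · exact (longReflection_commute_of_lt hn hhg).symm.eq
  · exact longReflection_mul_of_nested h1 h2 hk1 hk2

variable (m)

def toDihedral (hn : 3 ≤ n) : CactusGroup n →* DihedralGroup m :=
  PresentedGroup.toGroup (longReflection_rels hn)

theorem toDihedral_of (hn : 3 ≤ n) (g : CactusGen n) :
    toDihedral m hn (PresentedGroup.of g) = longReflection m g :=
  PresentedGroup.toGroup.of _

theorem toDihedral_surjective (hn : 3 ≤ n) : Function.Surjective (toDihedral m hn) := by
  refine MonoidHom.range_eq_top.mp (eq_top_of_sr_mem_of_sr_add_one_mem (a := (n : ZMod m)) ?_ ?_)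
  · refine ⟨PresentedGroup.of ⟨(1, n - 1), by omega, by omega, by omega⟩, ?_⟩
    rw [toDihedral_of, longReflection, if_pos (by dsimp only; omega)]
    dsimp only
    rw [show 1 + (n - 1) = n by omega]
  · refine ⟨PresentedGroup.of ⟨(1, n), by omega, by omega, le_rfl⟩, ?_⟩
    rw [toDihedral_of, longReflection, if_pos (by dsimp only; omega)]
    push_cast
    ring_nf

end CactusGroup

/-- For every `n ≥ 3` and every `m ≥ 1`, the dihedral group `D_m` of order `2m` is a
quotient of the cactus group `J_n`; in particular there is no upper bound on the orders
of the finite quotients of `J_n`. -/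
theorem cactus_dihedral_quotients (n : ℕ) (hn : 3 ≤ n) :
    (∀ m : ℕ, 1 ≤ m → ∃ φ : CactusGroup n →* DihedralGroup m, Function.Surjective φ) ∧
    (∀ N : ℕ, ∃ m : ℕ, 1 ≤ m ∧ N < Nat.card (DihedralGroup m) ∧
      ∃ φ : CactusGroup n →* DihedralGroup m, Function.Surjective φ) := by
  have quotient (m : ℕ) : ∃ φ : CactusGroup n →* DihedralGroup m, Function.Surjective φ :=
    ⟨CactusGroup.toDihedral m hn, CactusGroup.toDihedral_surjective m hn⟩
  refine ⟨fun m _ => quotient m, fun N => ⟨N + 1, by omega, ?_, quotient (N + 1)⟩⟩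
  rw [DihedralGroup.nat_card]
  omega
end

section
/- Let n ≥ 2 and let i, j ≥ 2 satisfy i + j ≤ n. Then the commutator [σ_i, σ_j] of the generators σ_i := σ_{1,i} and σ_j := σ_{1,j} of the cactus group J_n belongs to Γ_3(J_n). -/
open scoped commutatorElement

section LowerCentralSeries

variable {G : Type*} [Group G]

theorem commutatorElement_mem_lowerCentralSeries_succ (a : G) {k : G} {m : ℕ}
    (hk : k ∈ (⊤ : Subgroup G).lowerCentralSeries m) :
    ⁅a, k⁆ ∈ (⊤ : Subgroup G).lowerCentralSeries (m + 1) := by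
  rw [← commutatorElement_inv]
  exact inv_mem (Subgroup.commutator_mem_commutator hk (Subgroup.mem_top a))

theorem commutatorElement_mul_right_of_commute {a b : G} (k : G) (h : Commute a b) :
    ⁅a, k * b⁆ = ⁅a, k⁆ := by
  rw [commutatorElement_mul_right_eq_mul_conj, commutatorElement_eq_one_iff_commute.mpr h]
  group

theorem commutatorElement_conj_mem_lowerCentralSeries_two {a y : G} (x : G) (h : Commute a y) :
    ⁅a, x⁻¹ * y * x⁆ ∈ (⊤ : Subgroup G).lowerCentralSeries 2 := by
  have hconj : x⁻¹ * y * x = ⁅x⁻¹, y⁆ * y := by group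
  rw [hconj, commutatorElement_mul_right_of_commute _ h]
  exact commutatorElement_mem_lowerCentralSeries_succ a
    (Subgroup.commutator_mem_commutator (Subgroup.mem_top _) (Subgroup.mem_top _))

end LowerCentralSeries

section Cactus

variable {n : ℕ}

theorem commute_cactusσ_of_lt {p q r s : ℕ} (hqr : q < r) :
    Commute (cactusσ n p q) (cactusσ n r s) := by
  unfold cactusσ
  split_ifs with hpq hrs
  · exact PresentedGroup.mk_eq_mk_of_mul_inv_mem
      (Or.inr (Or.inl ⟨⟨(p, q), hpq⟩, ⟨(r, s), hrs⟩, Or.inl hqr, rfl⟩))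
  all_goals simp

theorem cactusσ_mul_cactusσ_of_le {p q r s : ℕ} (hp : 1 ≤ p) (hpr : p ≤ r) (hrs : r < s)
    (hsq : s ≤ q) (hqn : q ≤ n) :
    cactusσ n p q * cactusσ n r s = cactusσ n (p + q - s) (p + q - r) * cactusσ n p q := by
  have hg : 1 ≤ p ∧ p < q ∧ q ≤ n := by omega
  have hh : 1 ≤ r ∧ r < s ∧ s ≤ n := by omega
  have hk : 1 ≤ p + q - s ∧ p + q - s < p + q - r ∧ p + q - r ≤ n := by omega
  simp only [cactusσ, dif_pos hg, dif_pos hh, dif_pos hk]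
  exact PresentedGroup.mk_eq_mk_of_mul_inv_mem
    (Or.inr (Or.inr ⟨⟨(p, q), hg⟩, ⟨(r, s), hh⟩, ⟨(p + q - s, p + q - r), hk⟩,
      hpr, hsq, rfl, rfl, rfl⟩))

end Cactus

theorem cactus_commutator_in_gamma3_of_small_general (n i j : ℕ)
    (hj : 2 ≤ j) (hij : i + j ≤ n) :
    ⁅cactusσ n 1 i, cactusσ n 1 j⁆ ∈ (⊤ : Subgroup (CactusGroup n)).lowerCentralSeries 2 := by
  have hflip : cactusσ n 1 (i + j) * cactusσ n 1 j =
      cactusσ n (i + 1) (i + j) * cactusσ n 1 (i + j) := by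
    have h := cactusσ_mul_cactusσ_of_le (n := n) le_rfl le_rfl (by omega : 1 < j)
      (by omega : j ≤ i + j) hij
    rwa [show 1 + (i + j) - j = i + 1 by omega, show 1 + (i + j) - 1 = i + j by omega] at h
  have hconj : cactusσ n 1 j =
      (cactusσ n 1 (i + j))⁻¹ * cactusσ n (i + 1) (i + j) * cactusσ n 1 (i + j) := by
    rw [mul_assoc, ← hflip, inv_mul_cancel_left]
  rw [hconj]
  exact commutatorElement_conj_mem_lowerCentralSeries_two _ (commute_cactusσ_of_lt (by omega))

/-- If `i, j ≥ 2` and `i + j ≤ n`, then the commutator `[σ_{1,i}, σ_{1,j}]` belongs to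
`Γ₃(J_n) = lowerCentralSeries (CactusGroup n) 2`. -/
theorem cactus_commutator_in_gamma3_of_small (n i j : ℕ) (hn : 2 ≤ n)
    (hi : 2 ≤ i) (hj : 2 ≤ j) (hij : i + j ≤ n) :
    ⁅cactusσ n 1 i, cactusσ n 1 j⁆ ∈ (⊤ : Subgroup (CactusGroup n)).lowerCentralSeries 2 :=
  cactus_commutator_in_gamma3_of_small_general n i j hj hij
end
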